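/- Let 𝒜 be a finite nonempty set, μ a translation invariant probability measure on 𝒜^(ℤ^d), (A, G) a tiling of ℤ^d with A partitioned into nonempty sets A_1, …, A_N, A_{<k} = ∪_{i<k} A_i, and G_n = {Σ g_i ê_i : |g_i| ≤ n}. Then for each k, S( A_k + G_n | A_{<k} + G_n ) = Σ_{g ∈ G_n} S( A_k | (A_k + {h ∈ (G_n − g) : h < 0}) ∪ (A_{<k} + (G_n − g)) ), where < is the lexicographic order on G and G_n − g = {h − g : h ∈ G_n}. -/

import Mathlib

open MeasureTheory Real Filter Pointwise

/-- The lattice `ℤ^d`. -/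
abbrev LatZ (d : ℕ) := Fin d → ℤ

/-- Probability of the cylinder set determined by the configuration `x` on the finite set `Λ`. -/
noncomputable def cylProb {d : ℕ} {𝒜 : Type*} [MeasurableSpace 𝒜]
    (μ : Measure (LatZ d → 𝒜)) (Λ : Finset (LatZ d)) (x : Λ → 𝒜) : ℝ :=
  (μ {ω | ∀ v : Λ, ω v.1 = x v}).toReal

/-- The entropy `S(Λ)` of a finite set of sites `Λ` with respect to `μ`. -/
noncomputable def entS {d : ℕ} {𝒜 : Type*} [Fintype 𝒜] [MeasurableSpace 𝒜]
    (μ : Measure (LatZ d → 𝒜)) (Λ : Finset (LatZ d)) : ℝ :=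
  -∑ x : (Λ → 𝒜), cylProb μ Λ x * Real.log (cylProb μ Λ x)

/-- The conditional entropy `S(Λ | Λ')` (terms with zero probability vanish since
`Real.log 0 = 0` and `0 * log 0 = 0`). -/
noncomputable def condEnt {d : ℕ} {𝒜 : Type*} [Fintype 𝒜] [MeasurableSpace 𝒜]
    (μ : Measure (LatZ d → 𝒜)) (Λ Λ' : Finset (LatZ d)) : ℝ :=
  -∑ x : ((Λ ∪ Λ' : Finset (LatZ d)) → 𝒜),
      cylProb μ (Λ ∪ Λ') x *
        Real.log (cylProb μ (Λ ∪ Λ') x /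
          cylProb μ Λ' (fun v => x ⟨v.1, Finset.mem_union_right Λ v.2⟩))

/-- The shift map `σ_v`, `(σ_v x)(u) = x(u + v)`. -/
def shiftMap {d : ℕ} {𝒜 : Type*} (v : LatZ d) (ω : LatZ d → 𝒜) : LatZ d → 𝒜 :=
  fun u => ω (u + v)

/-- `μ` is translation invariant if it is preserved by every shift `σ_v`. -/
def TransInv {d : ℕ} {𝒜 : Type*} [MeasurableSpace 𝒜] (μ : Measure (LatZ d → 𝒜)) : Prop :=
  ∀ v : LatZ d, μ.map (shiftMap v) = μ

/-- The box `V_n = {v ∈ ℤ^d : |v_i| ≤ n ∀ i}` (also used as coordinate box `G_n`). -/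
noncomputable def Vbox (d n : ℕ) : Finset (LatZ d) :=
  Fintype.piFinset fun _ => Finset.Icc (-(n : ℤ)) (n : ℤ)

open Classical in
/-- The finite set `Λ' ∩ V_n` for a (possibly infinite) `Λ' ⊆ ℤ^d`. -/
noncomputable def interBox (d : ℕ) (Λ' : Set (LatZ d)) (n : ℕ) : Finset (LatZ d) :=
  (Vbox d n).filter (· ∈ Λ')

/-- The lattice point `Σ_i c_i ê_i` with coordinates `c` in the basis `e`. -/
def latt {d : ℕ} (e : Fin d → LatZ d) (c : Fin d → ℤ) : LatZ d :=
  ∑ i, c i • e i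

/-- Lexicographic comparison of coordinate vectors. -/
def lexLt {d : ℕ} (c c' : Fin d → ℤ) : Prop :=
  ∃ i, c i < c' i ∧ ∀ j, j < i → c j = c' j

/-- The subgroup `G` generated by `e`, as a set. -/
def Gfull {d : ℕ} (e : Fin d → LatZ d) : Set (LatZ d) :=
  Set.range (latt e)

/-- `G^- = {g ∈ G : g < 0}` in the lexicographic order on `G`. -/
def Gneg {d : ℕ} (e : Fin d → LatZ d) : Set (LatZ d) :=
  {g | ∃ c, lexLt c 0 ∧ g = latt e c}

/-- The finite subset `G_n = {Σ g_i ê_i : |g_i| ≤ n}` of `G`. -/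
noncomputable def GboxF {d : ℕ} (e : Fin d → LatZ d) (n : ℕ) : Finset (LatZ d) :=
  (Vbox d n).image (latt e)

/-- A tiling `(A, G)` of `ℤ^d`, with `G` the subgroup generated by the
`ℤ`-linearly independent family `e`. -/
structure IsTiling {d : ℕ} (A : Finset (LatZ d)) (e : Fin d → LatZ d) : Prop where
  zero_mem : (0 : LatZ d) ∈ A
  indep : LinearIndependent ℤ e
  cover : ∀ v : LatZ d, ∃ a ∈ A, ∃ c : Fin d → ℤ, v = a + latt e c
  disj : ∀ c c' : Fin d → ℤ, latt e c ≠ latt e c' →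
    Disjoint (A.image (· + latt e c)) (A.image (· + latt e c'))

/-- The unit cube `U_d`. -/
noncomputable def Ud (d : ℕ) : Finset (LatZ d) :=
  Fintype.piFinset fun _ => Finset.Icc (-1 : ℤ) 1

open Classical in
/-- The boundary `∂Λ = Λ ∩ (U_d + Λ^C)`. -/
noncomputable def bdry {d : ℕ} (Λ : Finset (LatZ d)) : Finset (LatZ d) :=
  Λ.filter (fun v => v ∈ (↑(Ud d) : Set (LatZ d)) + (↑Λ : Set (LatZ d))ᶜ)


/-!
By translation invariance of `μ`, the summand at `g ∈ G_n` equals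
`S(A_k + g | (A_k + G_n^{<g}) ∪ (A_{<k} + G_n))`, where `G_n^{<g}` is the set of `h ∈ G_n` with
`h < g`. By the chain rule `S(Λ | Λ') = S(Λ ∪ Λ') - S(Λ')` this is the increment of
`t ↦ S((A_k + t) ∪ (A_{<k} + G_n))` from `t = G_n^{<g}` to `t = G_n^{<g} ∪ {g}`. Summing over `g`
in increasing lexicographic order telescopes to `S((A_k + G_n) ∪ (A_{<k} + G_n)) - S(A_{<k} + G_n)`,
which is the left-hand side by the chain rule again.
-/

theorem Finset.sum_sub_insert_filter_lt {β M : Type*} [LinearOrder β] [AddCommGroup M]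
    (F : Finset β → M) (s : Finset β) :
    ∑ g ∈ s, (F (insert g (s.filter (· < g))) - F (s.filter (· < g))) = F s - F ∅ := by
  induction s using Finset.induction_on_max with
  | empty => simp
  | insert a s hlt ih =>
    have ha : a ∉ s := fun h => lt_irrefl a (hlt a h)
    have hfilter : ∀ g ∈ s, (insert a s).filter (· < g) = s.filter (· < g) := fun g hg => by
      rw [Finset.filter_insert, if_neg (hlt g hg).not_gt]
    rw [Finset.sum_insert ha, Finset.filter_insert, if_neg (lt_irrefl a),
      Finset.filter_true_of_mem hlt, Finset.sum_congr rfl fun g hg => by rw [hfilter g hg], ih]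
    abel

theorem Finset.sum_sub_insert_filter_of_isStrictTotalOrder {β M : Type*} [DecidableEq β]
    [AddCommGroup M] (r : β → β → Prop) [IsStrictTotalOrder β r] [DecidableRel r]
    (F : Finset β → M) (s : Finset β) :
    ∑ g ∈ s, (F (insert g (s.filter (r · g))) - F (s.filter (r · g))) = F s - F ∅ := by
  let _ := linearOrderOfSTO r
  convert Finset.sum_sub_insert_filter_lt F s <;> exact Iff.rfl

section FiniteEntropy

variable {α β : Type*} [Fintype α] [MeasurableSpace α] [MeasurableSingletonClass α]
  [MeasurableSpace β] [MeasurableSingletonClass β] (ν : Measure α) [IsFiniteMeasure ν] (f : α → β)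

theorem MeasureTheory.Measure.sum_real_singleton_mul_comp [Fintype β] (φ : β → ℝ) :
    ∑ x, ν.real {x} * φ (f x) = ∑ y, (ν.map f).real {y} * φ y := by
  simp only [← smul_eq_mul]
  rw [← integral_fintype .of_finite, ← integral_fintype .of_finite,
    integral_map Measurable.of_discrete.aemeasurable
      Measurable.of_discrete.aestronglyMeasurable]

theorem MeasureTheory.Measure.real_singleton_le_map (x : α) :
    ν.real {x} ≤ (ν.map f).real {f x} := by
  rw [map_measureReal_apply .of_discrete (measurableSet_singleton _)]
  exact measureReal_mono fun x' hx' => by simp_all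

theorem MeasureTheory.Measure.neg_sum_mul_log_div_map_eq_sub [Fintype β] :
    -∑ x, ν.real {x} * log (ν.real {x} / (ν.map f).real {f x}) =
      -∑ x, ν.real {x} * log (ν.real {x}) -
        -∑ y, (ν.map f).real {y} * log ((ν.map f).real {y}) := by
  have hsplit : ∀ x, ν.real {x} * log (ν.real {x} / (ν.map f).real {f x}) =
      ν.real {x} * log (ν.real {x}) - ν.real {x} * log ((ν.map f).real {f x}) := by
    intro x
    rcases eq_or_ne (ν.real {x}) 0 with h | h
    · simp [h]
    have hf : (ν.map f).real {f x} ≠ 0 :=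
      ((measureReal_nonneg.lt_of_ne' h).trans_le (ν.real_singleton_le_map f x)).ne'
    rw [log_div h hf, mul_sub]
  simp only [hsplit, Finset.sum_sub_distrib,
    ν.sum_real_singleton_mul_comp f fun y => log ((ν.map f).real {y})]
  ring

end FiniteEntropy

section LatticeEntropy

variable {d : ℕ} {𝒜 : Type*} [MeasurableSpace 𝒜]

theorem measurable_shiftMap (g : LatZ d) : Measurable (shiftMap (𝒜 := 𝒜) g) :=
  measurable_pi_lambda _ fun u => measurable_pi_apply (u + g)

variable [MeasurableSingletonClass 𝒜] (μ : Measure (LatZ d → 𝒜))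

theorem cylProb_eq_map_restrict (Λ : Finset (LatZ d)) (x : Λ → 𝒜) :
    cylProb μ Λ x = (μ.map Λ.restrict).real {x} := by
  rw [map_measureReal_apply (Finset.measurable_restrict Λ) (measurableSet_singleton x), cylProb,
    ← measureReal_def]
  congr 1
  ext ω
  simp [funext_iff]

def translateCfg (Λ : Finset (LatZ d)) (g : LatZ d) :
    (Λ → 𝒜) ≃ ((Λ + {g} : Finset (LatZ d)) → 𝒜) :=
  (Equiv.subtypeEquiv (Equiv.addRight g) fun v => by simp [Finset.mem_add]).arrowCongr (.refl 𝒜)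

theorem cylProb_add_singleton (hinv : TransInv μ) (Λ : Finset (LatZ d)) (g : LatZ d)
    (x : Λ → 𝒜) : cylProb μ (Λ + {g}) (translateCfg Λ g x) = cylProb μ Λ x := by
  have hpre : (Λ + {g}).restrict ⁻¹' ({translateCfg Λ g x} : Set (_ → 𝒜)) =
      shiftMap g ⁻¹' (Λ.restrict ⁻¹' {x}) := by
    ext ω
    simp only [Set.mem_preimage, Set.mem_singleton_iff, translateCfg, Equiv.arrowCongr,
      Equiv.coe_fn_mk, Equiv.coe_refl, Function.id_comp, Equiv.eq_comp_symm]
    rfl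
  have hcyl : MeasurableSet (Λ.restrict ⁻¹' ({x} : Set (_ → 𝒜))) :=
    Finset.measurable_restrict (X := fun _ => 𝒜) Λ (measurableSet_singleton x)
  rw [cylProb_eq_map_restrict, cylProb_eq_map_restrict,
    map_measureReal_apply (Finset.measurable_restrict _) (measurableSet_singleton _), hpre,
    ← map_measureReal_apply (measurable_shiftMap g) hcyl, hinv,
    map_measureReal_apply (Finset.measurable_restrict _) (measurableSet_singleton _)]

variable [Fintype 𝒜]

theorem entS_add_singleton (hinv : TransInv μ) (Λ : Finset (LatZ d)) (g : LatZ d) :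
    entS μ (Λ + {g}) = entS μ Λ := by
  rw [entS, entS, ← (translateCfg Λ g).sum_comp]
  simp only [cylProb_add_singleton μ hinv]

theorem condEnt_eq_entS_sub [IsFiniteMeasure μ] (Λ Λ' : Finset (LatZ d)) :
    condEnt μ Λ Λ' = entS μ (Λ ∪ Λ') - entS μ Λ' := by
  have hmarg : μ.map Λ'.restrict = (μ.map (Λ ∪ Λ').restrict).map
      (@Finset.restrict₂ _ (fun _ => 𝒜) _ _ Finset.subset_union_right) := by
    rw [Measure.map_map (Finset.measurable_restrict₂ _) (Finset.measurable_restrict _),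
      Finset.restrict₂_comp_restrict]
  simp only [condEnt, entS, cylProb_eq_map_restrict, hmarg]
  exact Measure.neg_sum_mul_log_div_map_eq_sub _ _

theorem condEnt_add_singleton [IsFiniteMeasure μ] (hinv : TransInv μ) (Λ Λ' : Finset (LatZ d))
    (g : LatZ d) : condEnt μ (Λ + {g}) (Λ' + {g}) = condEnt μ Λ Λ' := by
  rw [condEnt_eq_entS_sub, condEnt_eq_entS_sub, ← Finset.union_add, entS_add_singleton μ hinv,
    entS_add_singleton μ hinv]

theorem condEnt_translate_eq_entS_sub [IsFiniteMeasure μ] (hinv : TransInv μ)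
    (P B G : Finset (LatZ d)) (S : Set (LatZ d)) [DecidablePred (· ∈ S)] (g : LatZ d) :
    condEnt μ P ((P + (G.image (· - g)).filter (· ∈ S)) ∪ (B + G.image (· - g))) =
      entS μ ((P + insert g (G.filter (· - g ∈ S))) ∪ (B + G)) -
        entS μ ((P + G.filter (· - g ∈ S)) ∪ (B + G)) := by
  have hfilter : (G.image (· - g)).filter (· ∈ S) + {g} = G.filter (· - g ∈ S) := by
    ext
    simp [Finset.mem_add]
  have himage : G.image (· - g) + {g} = G := by
    ext
    simp [Finset.mem_add]
  rw [← condEnt_add_singleton μ hinv _ _ g, condEnt_eq_entS_sub, Finset.union_add, add_assoc,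
    add_assoc, hfilter, himage, ← Finset.union_assoc, ← Finset.add_union, Finset.insert_eq]

end LatticeEntropy

section Lattice

variable {d : ℕ} {e : Fin d → LatZ d}

theorem latt_eq_linearCombination (e : Fin d → LatZ d) :
    latt e = Fintype.linearCombination ℤ e :=
  funext fun c => (Fintype.linearCombination_apply ℤ e c).symm

theorem latt_injective (he : LinearIndependent ℤ e) : Function.Injective (latt e) :=
  latt_eq_linearCombination e ▸ he.fintypeLinearCombination_injective

theorem lexLt_eq_piLex :
    (lexLt : (Fin d → ℤ) → (Fin d → ℤ) → Prop) = Pi.Lex (· < ·) (· < ·) := by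
  ext a c
  exact exists_congr fun _ => and_comm

instance : IsStrictTotalOrder (Fin d → ℤ) lexLt := by
  rw [lexLt_eq_piLex]
  exact { toTrichotomous := Pi.trichotomous_lex _ _ wellFounded_lt
          toIsStrictOrder := (Pi.Lex.isStrictOrder : IsStrictOrder (Lex (Fin d → ℤ)) (· < ·)) }

theorem lexLt_sub_zero_iff (a c : Fin d → ℤ) : lexLt (a - c) 0 ↔ lexLt a c :=
  exists_congr fun _ => by simp only [Pi.sub_apply, Pi.zero_apply, sub_neg, sub_eq_zero]

theorem sub_mem_Gneg_iff (he : LinearIndependent ℤ e) (a c : Fin d → ℤ) :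
    latt e a - latt e c ∈ Gneg e ↔ lexLt a c := by
  rw [latt_eq_linearCombination, ← map_sub, ← latt_eq_linearCombination, ← lexLt_sub_zero_iff]
  simp only [Gneg, Set.mem_ofPred_eq, (latt_injective he).eq_iff]
  exact ⟨fun ⟨_, h, hc⟩ => hc ▸ h, fun h => ⟨_, h, rfl⟩⟩

theorem filter_sub_mem_Gneg_image_latt [DecidablePred (· ∈ Gneg e)] (he : LinearIndependent ℤ e)
    (V : Finset (Fin d → ℤ)) (c : Fin d → ℤ) [DecidablePred (lexLt · c)] :
    (V.image (latt e)).filter (· - latt e c ∈ Gneg e) = (V.filter (lexLt · c)).image (latt e) := by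
  rw [Finset.filter_image]
  congr 1
  exact Finset.filter_congr fun a _ => sub_mem_Gneg_iff he a c

end Lattice

open Classical in
theorem block_condEnt_translation_decomposition_general {d : ℕ} {𝒜 : Type*} [Fintype 𝒜]
    [MeasurableSpace 𝒜] [MeasurableSingletonClass 𝒜]
    (μ : Measure (LatZ d → 𝒜)) [IsProbabilityMeasure μ] (hinv : TransInv μ)
    (A : Finset (LatZ d)) (e : Fin d → LatZ d) (htile : IsTiling A e)
    (N : ℕ) (parts : Fin N → Finset (LatZ d)) (n : ℕ) (k : Fin N) :
    condEnt μ (parts k + GboxF e n) ((Finset.Iio k).biUnion parts + GboxF e n) =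
      ∑ g ∈ GboxF e n,
        condEnt μ (parts k)
          ((parts k + ((GboxF e n).image (fun h => h - g)).filter (fun h => h ∈ Gneg e)) ∪
            ((Finset.Iio k).biUnion parts + (GboxF e n).image (fun h => h - g))) := by
  set B := (Finset.Iio k).biUnion parts
  let F : Finset (Fin d → ℤ) → ℝ := fun t =>
    entS μ ((parts k + t.image (latt e)) ∪ (B + GboxF e n))
  have hends : condEnt μ (parts k + GboxF e n) (B + GboxF e n) = F (Vbox d n) - F ∅ := by
    simp only [F, condEnt_eq_entS_sub, GboxF, Finset.image_empty, Finset.add_empty,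
      Finset.empty_union]
  rw [hends, ← Finset.sum_sub_insert_filter_of_isStrictTotalOrder lexLt F (Vbox d n), GboxF,
    Finset.sum_image (latt_injective htile.indep).injOn]
  refine Finset.sum_congr rfl fun c _ => ?_
  rw [condEnt_translate_eq_entS_sub μ hinv, filter_sub_mem_Gneg_image_latt htile.indep]
  simp only [F, GboxF, Finset.image_insert]

open Classical in
/-- For a translation invariant `μ` and a tiling `(A, G)` with `A`
partitioned into `A_1, …, A_N`, for each `k`:
`S(A_k + G_n | A_{<k} + G_n)
  = Σ_{g ∈ G_n} S(A_k | (A_k + {h ∈ G_n − g : h < 0}) ∪ (A_{<k} + (G_n − g)))`,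
with `<` the lexicographic order on `G`. -/
theorem block_condEnt_translation_decomposition {d : ℕ} {𝒜 : Type*} [Fintype 𝒜] [Nonempty 𝒜]
    [MeasurableSpace 𝒜] [MeasurableSingletonClass 𝒜]
    (μ : Measure (LatZ d → 𝒜)) [IsProbabilityMeasure μ] (hinv : TransInv μ)
    (A : Finset (LatZ d)) (e : Fin d → LatZ d) (htile : IsTiling A e)
    (N : ℕ) (parts : Fin N → Finset (LatZ d))
    (hne : ∀ k, (parts k).Nonempty)
    (hdisj : ∀ k l, k ≠ l → Disjoint (parts k) (parts l))
    (hunion : Finset.univ.biUnion parts = A) (n : ℕ) (k : Fin N) :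
    condEnt μ (parts k + GboxF e n) ((Finset.Iio k).biUnion parts + GboxF e n) =
      ∑ g ∈ GboxF e n,
        condEnt μ (parts k)
          ((parts k + ((GboxF e n).image (fun h => h - g)).filter (fun h => h ∈ Gneg e)) ∪
            ((Finset.Iio k).biUnion parts + (GboxF e n).image (fun h => h - g))) :=
  block_condEnt_translation_decomposition_general μ hinv A e htile N parts n k
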